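/- The quotient of a synchronous algebra by a congruence is again a synchronous algebra, and the canonical quotient map x ↦ [x] is a surjective morphism of synchronous algebras. -/

import Mathlib

/-- Letter-types: `l` for a pair of proper letters, `p` for (letter, padding),
`q` for (padding, letter). -/
inductive LTy | l | p | q
deriving DecidableEq

/-- The five types of (well-formed) synchronous words:
`ll`, `ll→lb` (= `lllb`), `lb`, `ll→bl` (= `llbl`), `bl`. -/
inductive STy | ll | lllb | lb | llbl | bl
deriving DecidableEq

namespace STy

/-- Letter-type of the first letter. -/
def src : STy → LTy
  | ll => .l | lllb => .l | lb => .p | llbl => .l | bl => .q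

/-- Letter-type of the last letter. -/
def tgt : STy → LTy
  | ll => .l | lllb => .p | lb => .p | llbl => .q | bl => .q

/-- `σ = α→β` is compatible with `τ = β'→γ` iff `β = β'` or `β = ll`. -/
def compat (σ τ : STy) : Prop := σ.tgt = τ.src ∨ σ.tgt = LTy.l

/-- Product of compatible types (junk on incompatible pairs). -/
def comp : STy → STy → STy
  | ll, ll => ll
  | ll, lllb => lllb
  | ll, lb => lllb
  | ll, llbl => llbl
  | ll, bl => llbl
  | lllb, _ => lllb
  | lb, _ => lb
  | llbl, _ => llbl
  | bl, _ => bl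

end STy

/-- A synchronous algebra: a `STy`-typed set with a dependency relation and a
partial associative product defined exactly on compatible pairs, monotone with
respect to dependency, with units.  The partial product is modelled as an
`Option`-valued total product. -/
structure SyncAlg where
  A : Type
  ty : A → STy
  dep : A → A → Prop
  mul : A → A → Option A
  dep_refl : ∀ x, dep x x
  dep_symm : ∀ {x y}, dep x y → dep y x
  dep_eq : ∀ {x y}, dep x y → ty x = ty y → x = y
  mul_defined : ∀ x y, (mul x y).isSome ↔ (ty x).compat (ty y)
  ty_mul : ∀ {x y z}, mul x y = some z → ty z = (ty x).comp (ty y)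
  mul_assoc : ∀ x y z,
    (mul x y).bind (fun a => mul a z) = (mul y z).bind (fun b => mul x b)
  dep_mul_left : ∀ {x x' y z z'}, dep x x' →
    mul x y = some z → mul x' y = some z' → dep z z'
  dep_mul_right : ∀ {x x' y z z'}, dep x x' →
    mul y x = some z → mul y x' = some z' → dep z z'
  unit : STy → A
  ty_unit : ∀ τ, ty (unit τ) = τ
  unit_mul : ∀ {τ x z}, mul (unit τ) x = some z → dep z x
  mul_unit : ∀ {τ x z}, mul x (unit τ) = some z → dep z x
  unit_lllb : mul (unit .ll) (unit .lb) = some (unit .lllb)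
  unit_llbl : mul (unit .ll) (unit .bl) = some (unit .llbl)

namespace SyncAlg

/-- A closed subset of a synchronous algebra: saturated under dependency. -/
def Closed (S : SyncAlg) (C : Set S.A) : Prop :=
  ∀ {x y : S.A}, S.dep x y → (x ∈ C ↔ y ∈ C)

/-- Two-sided partial product `x·a·y`. -/
def mul3 (S : SyncAlg) (x a y : S.A) : Option S.A :=
  (S.mul x a).bind fun u => S.mul u y

/-- The syntactic congruence of a subset `C` of a synchronous algebra. -/
def synCong (S : SyncAlg) (C : Set S.A) (a b : S.A) : Prop :=
  (∀ x y u v, S.mul3 x a y = some u → S.mul3 x b y = some v → (u ∈ C ↔ v ∈ C)) ∧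
  (∀ x u v, S.mul x a = some u → S.mul x b = some v → (u ∈ C ↔ v ∈ C)) ∧
  (∀ y u v, S.mul a y = some u → S.mul b y = some v → (u ∈ C ↔ v ∈ C))

/-- Left residual `x⁻¹C` of a closed subset `C` by an element `x`. -/
def lres (S : SyncAlg) (x : S.A) (C : Set S.A) : Set S.A :=
  { y | ∃ y' u, S.synCong C y' y ∧ S.mul x y' = some u ∧ u ∈ C }

/-- Right residual `C·x⁻¹` of a closed subset `C` by an element `x`. -/
def rres (S : SyncAlg) (x : S.A) (C : Set S.A) : Set S.A :=
  { y | ∃ y' u, S.synCong C y' y ∧ S.mul y' x = some u ∧ u ∈ C }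

end SyncAlg

/-- Morphisms of synchronous algebras: preserve types, units, product and
dependency. -/
structure SyncHom (S T : SyncAlg) where
  toFun : S.A → T.A
  map_ty : ∀ x, T.ty (toFun x) = S.ty x
  map_unit : ∀ τ, toFun (S.unit τ) = T.unit τ
  map_mul : ∀ {x y z}, S.mul x y = some z →
    T.mul (toFun x) (toFun y) = some (toFun z)
  map_dep : ∀ {x y}, S.dep x y → T.dep (toFun x) (toFun y)

/-! Two elements are identified when they are `r`-related and of equal type; local transitivity
makes this an equivalence relation on whose classes `r` is well defined. The product is well
defined because `a·b` and `a'·b'` are linked through `a'·b`, which exists since `a'` has the type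
of `a`. Every axiom of the quotient is then inherited from `S`, with `r` in the role of the
dependency relation; the unit axioms need `r` to be coarser than dependency. -/

namespace SyncAlg

structure Congruence (S : SyncAlg) where
  r : S.A → S.A → Prop
  refl : ∀ x, r x x
  symm : ∀ {x y}, r x y → r y x
  of_dep : ∀ {x y}, S.dep x y → r x y
  loc_trans : ∀ {x' x y y'}, S.ty x' = S.ty x → S.ty y = S.ty y' →
    r x' x → r x y → r y y' → r x' y'
  mul_left : ∀ {x x' y z z'}, r x x' → S.mul x y = some z → S.mul x' y = some z' → r z z'
  mul_right : ∀ {x x' y z z'}, r x x' → S.mul y x = some z → S.mul y x' = some z' → r z z'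

theorem isSome_mul_iff_of_ty_eq (S : SyncAlg) {a a' b b' : S.A}
    (ha : S.ty a = S.ty a') (hb : S.ty b = S.ty b') :
    (S.mul a b).isSome ↔ (S.mul a' b').isSome := by
  rw [S.mul_defined, S.mul_defined, ha, hb]

namespace Congruence

variable {S : SyncAlg} (c : S.Congruence)

def setoid : Setoid S.A where
  r x y := c.r x y ∧ S.ty x = S.ty y
  iseqv :=
    { refl := fun x => ⟨c.refl x, rfl⟩
      symm := fun h => ⟨c.symm h.1, h.2.symm⟩
      trans := fun {_ y _} h₁ h₂ =>
        ⟨c.loc_trans h₁.2 h₂.2 h₁.1 (c.refl y) h₂.1, h₁.2.trans h₂.2⟩ }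

variable {c}

theorem r_congr {a a' b b' : S.A} (ha : c.setoid a a') (hb : c.setoid b b') :
    c.r a b ↔ c.r a' b' :=
  ⟨fun h => c.loc_trans ha.2.symm hb.2 (c.symm ha.1) h hb.1,
    fun h => c.loc_trans ha.2 hb.2.symm ha.1 h (c.symm hb.1)⟩

theorem setoid_mul_left {a a' b z z' : S.A} (ha : c.setoid a a')
    (hz : S.mul a b = some z) (hz' : S.mul a' b = some z') : c.setoid z z' :=
  ⟨c.mul_left ha.1 hz hz', by rw [S.ty_mul hz, S.ty_mul hz', ha.2]⟩

theorem setoid_mul_right {a b b' z z' : S.A} (hb : c.setoid b b')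
    (hz : S.mul a b = some z) (hz' : S.mul a b' = some z') : c.setoid z z' :=
  ⟨c.mul_right hb.1 hz hz', by rw [S.ty_mul hz, S.ty_mul hz', hb.2]⟩

theorem map_mk_mul_eq {a a' b b' : S.A} (ha : c.setoid a a') (hb : c.setoid b b') :
    (S.mul a b).map (Quotient.mk c.setoid) = (S.mul a' b').map (Quotient.mk c.setoid) := by
  have hdef := S.isSome_mul_iff_of_ty_eq ha.2 hb.2
  cases hz : S.mul a b with
  | none =>
    have hz' : S.mul a' b' = none := by simpa [hz] using hdef
    rw [hz']
  | some z =>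
    obtain ⟨z', hz'⟩ := Option.isSome_iff_exists.mp (hdef.mp (by rw [hz]; rfl))
    obtain ⟨w, hw⟩ := Option.isSome_iff_exists.mp
      ((S.isSome_mul_iff_of_ty_eq ha.2 rfl).mp (by rw [hz]; rfl))
    rw [hz']
    exact congrArg some <| Quotient.sound <|
      c.setoid.trans (setoid_mul_left ha hz hw) (setoid_mul_right hb hw hz')

variable (c)

def mul : Quotient c.setoid → Quotient c.setoid → Option (Quotient c.setoid) :=
  Quotient.lift₂ (fun a b => (S.mul a b).map (Quotient.mk c.setoid))
    fun _ _ _ _ => map_mk_mul_eq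

def dep : Quotient c.setoid → Quotient c.setoid → Prop :=
  Quotient.lift₂ c.r fun _ _ _ _ ha hb => propext (r_congr ha hb)

variable {c}

theorem mul_mk (a b : S.A) :
    c.mul ⟦a⟧ ⟦b⟧ = (S.mul a b).map (Quotient.mk c.setoid) := rfl

theorem mul_mk_eq_some_iff {a b : S.A} {z : Quotient c.setoid} :
    c.mul ⟦a⟧ ⟦b⟧ = some z ↔ ∃ u, S.mul a b = some u ∧ ⟦u⟧ = z :=
  Option.map_eq_some_iff

theorem map_mk_bind_mul_mk (o : Option S.A) (d : S.A) :
    (o.map (Quotient.mk c.setoid)).bind (fun u => c.mul u ⟦d⟧) =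
      (o.bind fun u => S.mul u d).map (Quotient.mk c.setoid) := by
  cases o <;> rfl

theorem map_mk_bind_mk_mul (o : Option S.A) (a : S.A) :
    (o.map (Quotient.mk c.setoid)).bind (fun u => c.mul ⟦a⟧ u) =
      (o.bind fun u => S.mul a u).map (Quotient.mk c.setoid) := by
  cases o <;> rfl

variable (c)

def quotient : SyncAlg where
  A := Quotient c.setoid
  ty := Quotient.lift S.ty fun _ _ h => h.2
  dep := c.dep
  mul := c.mul
  dep_refl := Quotient.ind c.refl
  dep_symm := by
    rintro ⟨a⟩ ⟨b⟩
    exact c.symm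
  dep_eq := by
    rintro ⟨a⟩ ⟨b⟩ hr hty
    exact Quotient.sound ⟨hr, hty⟩
  mul_defined := Quotient.ind₂ fun a b => by
    rw [mul_mk, Option.isSome_map]
    exact S.mul_defined a b
  ty_mul := by
    rintro ⟨a⟩ ⟨b⟩ z h
    obtain ⟨u, hu, rfl⟩ := mul_mk_eq_some_iff.mp h
    exact S.ty_mul hu
  mul_assoc x y z := Quotient.inductionOn₃ x y z fun a b d => by
    rw [mul_mk, mul_mk, map_mk_bind_mul_mk, map_mk_bind_mk_mul, S.mul_assoc]
  dep_mul_left := by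
    rintro ⟨a⟩ ⟨a'⟩ ⟨b⟩ z z' hr h h'
    obtain ⟨u, hu, rfl⟩ := mul_mk_eq_some_iff.mp h
    obtain ⟨u', hu', rfl⟩ := mul_mk_eq_some_iff.mp h'
    exact c.mul_left hr hu hu'
  dep_mul_right := by
    rintro ⟨a⟩ ⟨a'⟩ ⟨b⟩ z z' hr h h'
    obtain ⟨u, hu, rfl⟩ := mul_mk_eq_some_iff.mp h
    obtain ⟨u', hu', rfl⟩ := mul_mk_eq_some_iff.mp h'
    exact c.mul_right hr hu hu'
  unit τ := ⟦S.unit τ⟧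
  ty_unit := S.ty_unit
  unit_mul := by
    rintro τ ⟨a⟩ z h
    obtain ⟨u, hu, rfl⟩ := mul_mk_eq_some_iff.mp h
    exact c.of_dep (S.unit_mul hu)
  mul_unit := by
    rintro τ ⟨a⟩ z h
    obtain ⟨u, hu, rfl⟩ := mul_mk_eq_some_iff.mp h
    exact c.of_dep (S.mul_unit hu)
  unit_lllb := by
    rw [mul_mk, S.unit_lllb, Option.map_some]
  unit_llbl := by
    rw [mul_mk, S.unit_llbl, Option.map_some]

def mk' : SyncHom S c.quotient where
  toFun := Quotient.mk c.setoid
  map_ty _ := rfl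
  map_unit _ := rfl
  map_mul {x y _} h := (mul_mk x y).trans (congrArg _ h)
  map_dep := c.of_dep

theorem mk'_surjective : Function.Surjective c.mk'.toFun :=
  Quotient.mk_surjective

theorem mk'_eq_mk'_iff (x y : S.A) :
    c.mk'.toFun x = c.mk'.toFun y ↔ c.r x y ∧ S.ty x = S.ty y :=
  Quotient.eq

theorem dep_mk'_iff (x y : S.A) :
    c.quotient.dep (c.mk'.toFun x) (c.mk'.toFun y) ↔ c.r x y :=
  Iff.rfl

end Congruence

end SyncAlg

/-- The quotient of a synchronous algebra by a congruence
(a reflexive, symmetric relation that is coarser than the dependency relation,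
locally transitive and compatible with the product) is again a synchronous
algebra, and the canonical map `x ↦ [x]` is a surjective morphism of synchronous
algebras whose kernel on equal types is the congruence and whose induced
dependency relation is the congruence. -/
theorem quotient_syncAlg (S : SyncAlg) (r : S.A → S.A → Prop)
    (hrefl : ∀ x, r x x)
    (hsymm : ∀ {x y}, r x y → r y x)
    (hcoarse : ∀ {x y}, S.dep x y → r x y)
    (hloctrans : ∀ {x' x y y'}, S.ty x' = S.ty x → S.ty y = S.ty y' →
      r x' x → r x y → r y y' → r x' y')
    (hmul_left : ∀ {x x' y z z'}, r x x' →
      S.mul x y = some z → S.mul x' y = some z' → r z z')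
    (hmul_right : ∀ {x x' y z z'}, r x x' →
      S.mul y x = some z → S.mul y x' = some z' → r z z') :
    ∃ (Q : SyncAlg) (π : SyncHom S Q),
      Function.Surjective π.toFun ∧
      (∀ x y : S.A, π.toFun x = π.toFun y ↔ (r x y ∧ S.ty x = S.ty y)) ∧
      (∀ x y : S.A, Q.dep (π.toFun x) (π.toFun y) ↔ r x y) := by
  let c : S.Congruence := ⟨r, hrefl, hsymm, hcoarse, hloctrans, hmul_left, hmul_right⟩
  exact ⟨c.quotient, c.mk', c.mk'_surjective, c.mk'_eq_mk'_iff, c.dep_mk'_iff⟩
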